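/- Let A : ℝ^N × ℝ^N → ℝ be three times continuously differentiable and antisymmetric, A(x,x′) = −A(x′,x), and set a_i(x) := [A_{,i}] and a_{ikl}(x) := [A_{,ikl}]. Then the coincidence values of the mixed third derivatives are: [A_{,ikl′}] = ½a_{i,kl} + ½a_{k,il} − a_{ikl} and [A_{,ik′l′}] = −½a_{l,ik} − ½a_{k,il} + a_{ikl}. -/

import Mathlib

/-- Partial derivative of a two-point function with respect to the `i`-th
coordinate of its first argument. -/
noncomputable def d1 {N : ℕ} (F : (Fin N → ℝ) → (Fin N → ℝ) → ℝ) (i : Fin N)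
    (x x' : Fin N → ℝ) : ℝ :=
  fderiv ℝ (fun y => F y x') x (Pi.single i 1)

/-- Partial derivative of a two-point function with respect to the `i`-th
coordinate of its second argument. -/
noncomputable def d2 {N : ℕ} (F : (Fin N → ℝ) → (Fin N → ℝ) → ℝ) (i : Fin N)
    (x x' : Fin N → ℝ) : ℝ :=
  fderiv ℝ (fun y => F x y) x' (Pi.single i 1)

/-- Partial derivative of a one-point function with respect to the `k`-th
coordinate. -/
noncomputable def pd {N : ℕ} (f : (Fin N → ℝ) → ℝ) (k : Fin N)
    (x : Fin N → ℝ) : ℝ :=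
  fderiv ℝ f x (Pi.single k 1)

section helpers
variable {E F G : Type*} [NormedAddCommGroup E] [NormedSpace ℝ E]
  [NormedAddCommGroup F] [NormedSpace ℝ F] [NormedAddCommGroup G] [NormedSpace ℝ G]

lemma fderiv_applyConst {C : E → (G →L[ℝ] F)} {p : E} (hC : DifferentiableAt ℝ C p) (v : G) :
    fderiv ℝ (fun q => C q v) p = (ContinuousLinearMap.apply ℝ F v).comp (fderiv ℝ C p) :=
  ((ContinuousLinearMap.apply ℝ F v).hasFDerivAt.comp p hC.hasFDerivAt).fderiv

lemma fderiv_comp_fst {H : E × F → G} {x : E} {x' : F} (hH : DifferentiableAt ℝ H (x, x')) (v : E) :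
    fderiv ℝ (fun y => H (y, x')) x v = fderiv ℝ H (x, x') (v, 0) := by
  have h1 : HasFDerivAt (fun y : E => (y, x'))
      ((ContinuousLinearMap.id ℝ E).prod 0) x :=
    (hasFDerivAt_id x).prodMk (hasFDerivAt_const x' x)
  have h2 : HasFDerivAt (fun y => H (y, x'))
      ((fderiv ℝ H (x, x')).comp ((ContinuousLinearMap.id ℝ E).prod 0)) x :=
    hH.hasFDerivAt.comp x h1
  rw [h2.fderiv]; simp

lemma fderiv_comp_snd {H : E × F → G} {x : E} {x' : F} (hH : DifferentiableAt ℝ H (x, x')) (v : F) :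
    fderiv ℝ (fun y => H (x, y)) x' v = fderiv ℝ H (x, x') (0, v) := by
  have h1 : HasFDerivAt (fun y : F => (x, y))
      ((0 : F →L[ℝ] E).prod (ContinuousLinearMap.id ℝ F)) x' :=
    (hasFDerivAt_const x x').prodMk (hasFDerivAt_id x')
  have h2 : HasFDerivAt (fun y => H (x, y))
      ((fderiv ℝ H (x, x')).comp ((0 : F →L[ℝ] E).prod (ContinuousLinearMap.id ℝ F))) x' :=
    hH.hasFDerivAt.comp x' h1
  rw [h2.fderiv]; simp

lemma fderiv_comp_diag {H : E × E → G} {x : E} (hH : DifferentiableAt ℝ H (x, x)) (v : E) :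
    fderiv ℝ (fun y => H (y, y)) x v = fderiv ℝ H (x, x) (v, v) := by
  have h1 : HasFDerivAt (fun y : E => (y, y))
      ((ContinuousLinearMap.id ℝ E).prod (ContinuousLinearMap.id ℝ E)) x :=
    (hasFDerivAt_id x).prodMk (hasFDerivAt_id x)
  have h2 := HasFDerivAt.comp (f := fun y : E => (y, y)) (g := H) x hH.hasFDerivAt h1
  rw [show (fun y => H (y, y)) = H ∘ (fun y : E => (y, y)) from rfl, h2.fderiv]; simp
end helpers

namespace Anti3

variable {N : ℕ}

abbrev EE (N : ℕ) := (Fin N → ℝ) × (Fin N → ℝ)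

noncomputable def Gf (A : (Fin N → ℝ) → (Fin N → ℝ) → ℝ) : EE N → ℝ := fun p => A p.1 p.2
noncomputable def f1 (A : (Fin N → ℝ) → (Fin N → ℝ) → ℝ) := fderiv ℝ (Gf A)
noncomputable def f2 (A : (Fin N → ℝ) → (Fin N → ℝ) → ℝ) := fderiv ℝ (f1 A)
noncomputable def f3 (A : (Fin N → ℝ) → (Fin N → ℝ) → ℝ) := fderiv ℝ (f2 A)

def uv (i : Fin N) : EE N := (Pi.single i 1, 0)
def wv (i : Fin N) : EE N := (0, Pi.single i 1)

variable {A : (Fin N → ℝ) → (Fin N → ℝ) → ℝ}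

lemma hGd (hA : ContDiff ℝ 3 (Gf A)) : Differentiable ℝ (Gf A) :=
  hA.differentiable (by norm_num)

lemma hf1c (hA : ContDiff ℝ 3 (Gf A)) : ContDiff ℝ 2 (f1 A) :=
  hA.fderiv_right (by norm_num)

lemma hf1d (hA : ContDiff ℝ 3 (Gf A)) : Differentiable ℝ (f1 A) :=
  (hf1c hA).differentiable (by norm_num)

lemma hf2c (hA : ContDiff ℝ 3 (Gf A)) : ContDiff ℝ 1 (f2 A) :=
  (hf1c hA).fderiv_right (by norm_num)

lemma hf2d (hA : ContDiff ℝ 3 (Gf A)) : Differentiable ℝ (f2 A) :=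
  (hf2c hA).differentiable (by norm_num)

lemma hf1ap (hA : ContDiff ℝ 3 (Gf A)) (v : EE N) :
    Differentiable ℝ (fun q => f1 A q v) :=
  (hf1d hA).clm_apply (differentiable_const v)

lemma hf2ap (hA : ContDiff ℝ 3 (Gf A)) (v w : EE N) :
    Differentiable ℝ (fun q => f2 A q v w) :=
  ((hf2d hA).clm_apply (differentiable_const v)).clm_apply (differentiable_const w)

lemma eval1 (hA : ContDiff ℝ 3 (Gf A)) (p v w : EE N) :
    fderiv ℝ (fun q => f1 A q v) p w = f2 A p w v := by
  rw [fderiv_applyConst ((hf1d hA).differentiableAt) v]; rfl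

lemma eval2 (hA : ContDiff ℝ 3 (Gf A)) (p v w z : EE N) :
    fderiv ℝ (fun q => f2 A q v w) p z = f3 A p z v w := by
  have hC : DifferentiableAt ℝ (fun q => f2 A q v) p :=
    ((hf2d hA).clm_apply (differentiable_const v)).differentiableAt
  rw [fderiv_applyConst (C := fun q => f2 A q v) hC w,
    fderiv_applyConst ((hf2d hA).differentiableAt) v]
  rfl

lemma d1_eq (hA : ContDiff ℝ 3 (Gf A)) (i : Fin N) (x x' : Fin N → ℝ) :
    d1 A i x x' = f1 A (x, x') (uv i) :=
  fderiv_comp_fst (H := Gf A) ((hGd hA).differentiableAt) (Pi.single i 1)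

lemma d1d1_eq (hA : ContDiff ℝ 3 (Gf A)) (i k : Fin N) (x x' : Fin N → ℝ) :
    d1 (d1 A i) k x x' = f2 A (x, x') (uv k) (uv i) := by
  have hfun : (fun y => d1 A i y x') = (fun y => f1 A (y, x') (uv i)) :=
    funext fun y => d1_eq hA i y x'
  have h0 : d1 (d1 A i) k x x'
      = fderiv ℝ (fun y => f1 A (y, x') (uv i)) x (Pi.single k 1) := by
    show fderiv ℝ (fun y => d1 A i y x') x (Pi.single k 1) = _
    rw [hfun]
  have h1 := fderiv_comp_fst (H := fun q => f1 A q (uv i)) (x := x) (x' := x')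
    ((hf1ap hA (uv i)).differentiableAt) (Pi.single k 1)
  have h2 := eval1 hA (x, x') (uv i) (uv k)
  exact h0.trans (h1.trans h2)

lemma d2d1_eq (hA : ContDiff ℝ 3 (Gf A)) (i k : Fin N) (x x' : Fin N → ℝ) :
    d2 (d1 A i) k x x' = f2 A (x, x') (wv k) (uv i) := by
  have hfun : (fun y => d1 A i x y) = (fun y => f1 A (x, y) (uv i)) :=
    funext fun y => d1_eq hA i x y
  have h0 : d2 (d1 A i) k x x'
      = fderiv ℝ (fun y => f1 A (x, y) (uv i)) x' (Pi.single k 1) := by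
    show fderiv ℝ (fun y => d1 A i x y) x' (Pi.single k 1) = _
    rw [hfun]
  have h1 := fderiv_comp_snd (H := fun q => f1 A q (uv i)) (x := x) (x' := x')
    ((hf1ap hA (uv i)).differentiableAt) (Pi.single k 1)
  have h2 := eval1 hA (x, x') (uv i) (wv k)
  exact h0.trans (h1.trans h2)

lemma d1d1d1_eq (hA : ContDiff ℝ 3 (Gf A)) (i k l : Fin N) (x x' : Fin N → ℝ) :
    d1 (d1 (d1 A i) k) l x x' = f3 A (x, x') (uv l) (uv k) (uv i) := by
  have hfun : (fun y => d1 (d1 A i) k y x') = (fun y => f2 A (y, x') (uv k) (uv i)) :=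
    funext fun y => d1d1_eq hA i k y x'
  have h0 : d1 (d1 (d1 A i) k) l x x'
      = fderiv ℝ (fun y => f2 A (y, x') (uv k) (uv i)) x (Pi.single l 1) := by
    show fderiv ℝ (fun y => d1 (d1 A i) k y x') x (Pi.single l 1) = _
    rw [hfun]
  have h1 := fderiv_comp_fst (H := fun q => f2 A q (uv k) (uv i)) (x := x) (x' := x')
    ((hf2ap hA (uv k) (uv i)).differentiableAt) (Pi.single l 1)
  have h2 := eval2 hA (x, x') (uv k) (uv i) (uv l)
  exact h0.trans (h1.trans h2)

lemma d2d1d1_eq (hA : ContDiff ℝ 3 (Gf A)) (i k l : Fin N) (x x' : Fin N → ℝ) :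
    d2 (d1 (d1 A i) k) l x x' = f3 A (x, x') (wv l) (uv k) (uv i) := by
  have hfun : (fun y => d1 (d1 A i) k x y) = (fun y => f2 A (x, y) (uv k) (uv i)) :=
    funext fun y => d1d1_eq hA i k x y
  have h0 : d2 (d1 (d1 A i) k) l x x'
      = fderiv ℝ (fun y => f2 A (x, y) (uv k) (uv i)) x' (Pi.single l 1) := by
    show fderiv ℝ (fun y => d1 (d1 A i) k x y) x' (Pi.single l 1) = _
    rw [hfun]
  have h1 := fderiv_comp_snd (H := fun q => f2 A q (uv k) (uv i)) (x := x) (x' := x')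
    ((hf2ap hA (uv k) (uv i)).differentiableAt) (Pi.single l 1)
  have h2 := eval2 hA (x, x') (uv k) (uv i) (wv l)
  exact h0.trans (h1.trans h2)

lemma d2d2d1_eq (hA : ContDiff ℝ 3 (Gf A)) (i k l : Fin N) (x x' : Fin N → ℝ) :
    d2 (d2 (d1 A i) k) l x x' = f3 A (x, x') (wv l) (wv k) (uv i) := by
  have hfun : (fun y => d2 (d1 A i) k x y) = (fun y => f2 A (x, y) (wv k) (uv i)) :=
    funext fun y => d2d1_eq hA i k x y
  have h0 : d2 (d2 (d1 A i) k) l x x'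
      = fderiv ℝ (fun y => f2 A (x, y) (wv k) (uv i)) x' (Pi.single l 1) := by
    show fderiv ℝ (fun y => d2 (d1 A i) k x y) x' (Pi.single l 1) = _
    rw [hfun]
  have h1 := fderiv_comp_snd (H := fun q => f2 A q (wv k) (uv i)) (x := x) (x' := x')
    ((hf2ap hA (wv k) (uv i)).differentiableAt) (Pi.single l 1)
  have h2 := eval2 hA (x, x') (wv k) (uv i) (wv l)
  exact h0.trans (h1.trans h2)

lemma single_add (k : Fin N) :
    ((Pi.single k 1, Pi.single k 1) : EE N) = uv k + wv k := by
  simp [uv, wv, Prod.ext_iff]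

lemma pd_diag1 (hA : ContDiff ℝ 3 (Gf A)) (v : EE N) (k : Fin N) (x : Fin N → ℝ) :
    pd (fun y => f1 A (y, y) v) k x = f2 A (x, x) (uv k + wv k) v := by
  have h1 := fderiv_comp_diag (H := fun q => f1 A q v) (x := x)
    ((hf1ap hA v).differentiableAt) (Pi.single k 1)
  rw [single_add] at h1
  exact h1.trans (eval1 hA (x, x) v (uv k + wv k))

lemma pd_diag2 (hA : ContDiff ℝ 3 (Gf A)) (v w : EE N) (l : Fin N) (x : Fin N → ℝ) :
    pd (fun y => f2 A (y, y) v w) l x = f3 A (x, x) (uv l + wv l) v w := by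
  have h1 := fderiv_comp_diag (H := fun q => f2 A q v w) (x := x)
    ((hf2ap hA v w).differentiableAt) (Pi.single l 1)
  rw [single_add] at h1
  exact h1.trans (eval2 hA (x, x) v w (uv l + wv l))

lemma conn (p : EE N) (m : Fin 3 → EE N) :
    iteratedFDeriv ℝ 3 (Gf A) p m = f3 A p (m 0) (m 1) (m 2) := by
  have h := iteratedFDeriv_succ_apply_right (𝕜 := ℝ) (f := Gf A) (x := p) (n := 2) m
  have h2 := iteratedFDeriv_two_apply (𝕜 := ℝ) (fun y => fderiv ℝ (Gf A) y) p (Fin.init m)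
  exact h.trans (congrArg (fun L => L (m (Fin.last 2))) h2)

lemma sym23 (hA : ContDiff ℝ 3 (Gf A)) (p v1 v2 v3 : EE N) :
    f3 A p v1 v2 v3 = f3 A p v1 v3 v2 := by
  have hsym : (fun q => f2 A q v2 v3) = (fun q => f2 A q v3 v2) :=
    funext fun q => (hA.contDiffAt (x := q)).isSymmSndFDerivAt (by norm_num) v2 v3
  rw [← eval2 hA p v2 v3 v1, hsym, eval2 hA p v3 v2 v1]

lemma sym12 (hA : ContDiff ℝ 3 (Gf A)) (p v1 v2 v3 : EE N) :
    f3 A p v1 v2 v3 = f3 A p v2 v1 v3 := by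
  have h := ((hf1c hA).contDiffAt (x := p)
    |>.isSymmSndFDerivAt (by simp : minSmoothness ℝ 2 ≤ 2)) v1 v2
  exact congrArg (fun (L : EE N →L[ℝ] ℝ) => L v3) h

lemma anti3 (hA : ContDiff ℝ 3 (Gf A)) (hanti : ∀ x x', A x x' = - A x' x)
    (p v1 v2 v3 : EE N) :
    f3 A p v1 v2 v3
      = - f3 A (p.2, p.1) (v1.2, v1.1) (v2.2, v2.1) (v3.2, v3.1) := by
  set σ : EE N →L[ℝ] EE N :=
    ↑(ContinuousLinearEquiv.prodComm ℝ (Fin N → ℝ) (Fin N → ℝ)) with hσ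
  have hG' : Gf A = -(Gf A ∘ σ) := funext fun q => hanti q.1 q.2
  have h1 : iteratedFDeriv ℝ 3 (Gf A) p ![v1, v2, v3]
      = -(iteratedFDeriv ℝ 3 (Gf A ∘ σ) p ![v1, v2, v3]) := by
    conv_lhs => rw [hG']
    rw [iteratedFDeriv_neg_apply]
    rfl
  have h2 := σ.iteratedFDeriv_comp_right (f := Gf A) hA p (i := 3) (by norm_num)
  have h3 : iteratedFDeriv ℝ 3 (Gf A ∘ σ) p ![v1, v2, v3]
      = iteratedFDeriv ℝ 3 (Gf A) (σ p) (fun j => σ (![v1, v2, v3] j)) := by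
    rw [h2]; rfl
  have h4 := conn (A := A) p ![v1, v2, v3]
  have h5 := conn (A := A) (σ p) (fun j => σ (![v1, v2, v3] j))
  simp only [Matrix.cons_val_zero, Matrix.cons_val_one, Matrix.head_cons,
    Matrix.cons_val_two, Matrix.tail_cons] at h4 h5
  rw [← h4, h1, h3, h5]
  rfl

end Anti3

/-- coincidence values of the mixed third derivatives of an
antisymmetric two-point function `A`, expressed through
`a_i(x) = [A_{,i}]` and `a_{ikl}(x) = [A_{,ikl}]`. -/
theorem antisymmetric_third_derivatives_at_coincidence
    (N : ℕ) (A : (Fin N → ℝ) → (Fin N → ℝ) → ℝ)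
    (hA : ContDiff ℝ 3 fun p : (Fin N → ℝ) × (Fin N → ℝ) => A p.1 p.2)
    (hanti : ∀ x x', A x x' = - A x' x)
    (a : Fin N → (Fin N → ℝ) → ℝ)
    (ha : ∀ i x, a i x = d1 A i x x)
    (aikl : Fin N → Fin N → Fin N → (Fin N → ℝ) → ℝ)
    (haikl : ∀ i k l x, aikl i k l x = d1 (d1 (d1 A i) k) l x x) :
    (∀ (i k l : Fin N) x, d2 (d1 (d1 A i) k) l x x =
      (1 / 2) * pd (pd (a i) k) l x + (1 / 2) * pd (pd (a k) i) l x
        - aikl i k l x) ∧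
    (∀ (i k l : Fin N) x, d2 (d2 (d1 A i) k) l x x =
      -((1 / 2) * pd (pd (a l) i) k x) - (1 / 2) * pd (pd (a k) i) l x
        + aikl i k l x) := by
  have hG : ContDiff ℝ 3 (Anti3.Gf A) := hA
  open Anti3 in
  -- rewrite `a`, `pd (pd (a i) k) l`, `aikl` in terms of `f1, f2, f3`
  have ha' : ∀ i, a i = fun y => Anti3.f1 A (y, y) (Anti3.uv i) :=
    fun i => funext fun y => (ha i y).trans (Anti3.d1_eq hG i y y)
  have hpd1 : ∀ (i k : Fin N),
      pd (a i) k = fun y => Anti3.f2 A (y, y) (Anti3.uv k + Anti3.wv k) (Anti3.uv i) := by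
    intro i k
    funext y
    rw [show pd (a i) k = pd (fun z => Anti3.f1 A (z, z) (Anti3.uv i)) k by rw [ha' i]]
    exact Anti3.pd_diag1 hG _ k y
  have hpd2 : ∀ (i k l : Fin N) (x : Fin N → ℝ),
      pd (pd (a i) k) l x
        = Anti3.f3 A (x, x) (Anti3.uv l + Anti3.wv l) (Anti3.uv k + Anti3.wv k)
            (Anti3.uv i) := by
    intro i k l x
    rw [hpd1 i k]
    exact Anti3.pd_diag2 hG _ _ l x
  have haikl' : ∀ (i k l : Fin N) (x : Fin N → ℝ),
      aikl i k l x = Anti3.f3 A (x, x) (Anti3.uv l) (Anti3.uv k) (Anti3.uv i) :=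
    fun i k l x => (haikl i k l x).trans (Anti3.d1d1d1_eq hG i k l x x)
  constructor
  · intro i k l x
    have S23 := fun v1 v2 v3 => Anti3.sym23 hG (x, x) v1 v2 v3
    have Dwwu : ∀ a' b' c' : Fin N,
        Anti3.f3 A (x, x) (Anti3.wv a') (Anti3.wv b') (Anti3.uv c')
          = - Anti3.f3 A (x, x) (Anti3.uv a') (Anti3.uv b') (Anti3.wv c') :=
      fun a' b' c' => Anti3.anti3 hG hanti (x, x) (Anti3.wv a') (Anti3.wv b') (Anti3.uv c')
    rw [Anti3.d2d1d1_eq hG i k l x x, hpd2 i k l x, hpd2 k i l x, haikl' i k l x]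
    simp only [map_add, ContinuousLinearMap.add_apply]
    have e1 := S23 (Anti3.uv l) (Anti3.uv i) (Anti3.uv k)
    have e2 := S23 (Anti3.wv l) (Anti3.uv i) (Anti3.uv k)
    have e3 := Dwwu l k i
    have e4 := Dwwu l i k
    have e5 := S23 (Anti3.uv l) (Anti3.uv i) (Anti3.wv k)
    have e6 := S23 (Anti3.uv l) (Anti3.wv i) (Anti3.uv k)
    linarith [e1, e2, e3, e4, e5, e6]
  · intro i k l x
    have S23 := fun v1 v2 v3 => Anti3.sym23 hG (x, x) v1 v2 v3
    have S12 := fun v1 v2 v3 => Anti3.sym12 hG (x, x) v1 v2 v3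
    have S13 : ∀ v1 v2 v3 : Anti3.EE N,
        Anti3.f3 A (x, x) v1 v2 v3 = Anti3.f3 A (x, x) v3 v2 v1 := by
      intro v1 v2 v3
      rw [S12 v1 v2 v3, S23 v2 v1 v3, S12 v2 v3 v1]
    have Dwwu : ∀ a' b' c' : Fin N,
        Anti3.f3 A (x, x) (Anti3.wv a') (Anti3.wv b') (Anti3.uv c')
          = - Anti3.f3 A (x, x) (Anti3.uv a') (Anti3.uv b') (Anti3.wv c') :=
      fun a' b' c' => Anti3.anti3 hG hanti (x, x) (Anti3.wv a') (Anti3.wv b') (Anti3.uv c')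
    rw [Anti3.d2d2d1_eq hG i k l x x, hpd2 l i k x, hpd2 k i l x, haikl' i k l x]
    simp only [map_add, ContinuousLinearMap.add_apply]
    have a1 := Dwwu l k i
    have a2 := S13 (Anti3.uv l) (Anti3.uv k) (Anti3.wv i)
    have a3 := S13 (Anti3.uv k) (Anti3.uv i) (Anti3.uv l)
    have a4 := S23 (Anti3.uv l) (Anti3.uv i) (Anti3.uv k)
    have a5 := S13 (Anti3.uv k) (Anti3.wv i) (Anti3.uv l)
    have a6 := S12 (Anti3.uv l) (Anti3.wv i) (Anti3.uv k)
    have a7 := S23 (Anti3.wv i) (Anti3.uv l) (Anti3.uv k)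
    have a8 := S23 (Anti3.wv k) (Anti3.uv i) (Anti3.uv l)
    have a9 := Dwwu k i l
    have a10 := S13 (Anti3.uv k) (Anti3.uv i) (Anti3.wv l)
    have a11 := S23 (Anti3.wv l) (Anti3.uv i) (Anti3.uv k)
    have a12 := Dwwu l i k
    have a13 := S13 (Anti3.uv l) (Anti3.uv i) (Anti3.wv k)
    linarith [a1, a2, a3, a4, a5, a6, a7, a8, a9, a10, a11, a12, a13]
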